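/- arXiv:2205.03308 — 3 statements merged into one kernel-verified Lean document; each statement's English description precedes it below -/
import Mathlib

section
/- The independence number of the OR product of two finite simple graphs equals the product of their independence numbers: α(G × H) = α(G) · α(H). -/
/-- The OR (disjunctive / co-normal) product of two simple graphs. -/
def SimpleGraph.orProd {V W : Type*} (G : SimpleGraph V) (H : SimpleGraph W) :
    SimpleGraph (V × W) where
  Adj p q := G.Adj p.1 q.1 ∨ H.Adj p.2 q.2
  symm := ⟨fun _ _ h => h.imp (fun h' => h'.symm) (fun h' => h'.symm)⟩
  loopless := ⟨fun p h => h.elim (G.loopless.irrefl p.1) (H.loopless.irrefl p.2)⟩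

/-- A finset of vertices is independent: no two of its members are adjacent. -/
def SimpleGraph.IsIndepFinset {V : Type*} (G : SimpleGraph V) (s : Finset V) : Prop :=
  ∀ u ∈ s, ∀ v ∈ s, ¬ G.Adj u v

/-- The independence number: the maximum cardinality of an independent set. -/
noncomputable def SimpleGraph.indepNumFin {V : Type*} (G : SimpleGraph V) : ℕ :=
  sSup {k : ℕ | ∃ s : Finset V, G.IsIndepFinset s ∧ s.card = k}

namespace SimpleGraph

variable {V W : Type*} {G : SimpleGraph V} {H : SimpleGraph W}

theorem IsIndepFinset.image_fst {s : Finset (V × W)} [DecidableEq V]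
    (hs : (G.orProd H).IsIndepFinset s) : G.IsIndepFinset (s.image Prod.fst) := by
  simp only [IsIndepFinset, Finset.forall_mem_image]
  exact fun p hp q hq hadj => hs p hp q hq (Or.inl hadj)

theorem IsIndepFinset.image_snd {s : Finset (V × W)} [DecidableEq W]
    (hs : (G.orProd H).IsIndepFinset s) : H.IsIndepFinset (s.image Prod.snd) := by
  simp only [IsIndepFinset, Finset.forall_mem_image]
  exact fun p hp q hq hadj => hs p hp q hq (Or.inr hadj)

theorem IsIndepFinset.product {s : Finset V} {t : Finset W} (hs : G.IsIndepFinset s)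
    (ht : H.IsIndepFinset t) : (G.orProd H).IsIndepFinset (s ×ˢ t) := by
  rintro ⟨u, w⟩ huw ⟨v, x⟩ hvx hadj
  rw [Finset.mem_product] at huw hvx
  exact hadj.elim (hs u huw.1 v hvx.1) (ht w huw.2 x hvx.2)

theorem bddAbove_indepFinset_card [Finite V] (G : SimpleGraph V) :
    BddAbove {k : ℕ | ∃ s : Finset V, G.IsIndepFinset s ∧ s.card = k} := by
  have := Fintype.ofFinite V
  refine ⟨Fintype.card V, ?_⟩
  rintro _ ⟨s, -, rfl⟩
  exact s.card_le_univ

theorem IsIndepFinset.card_le_indepNumFin [Finite V] {s : Finset V}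
    (hs : G.IsIndepFinset s) : s.card ≤ G.indepNumFin :=
  le_csSup (bddAbove_indepFinset_card G) ⟨s, hs, rfl⟩

theorem exists_isIndepFinset_card_eq_indepNumFin [Finite V] (G : SimpleGraph V) :
    ∃ s : Finset V, G.IsIndepFinset s ∧ s.card = G.indepNumFin := by
  refine Nat.sSup_mem ?_ (bddAbove_indepFinset_card G)
  exact ⟨0, ∅, by simp [IsIndepFinset], rfl⟩

theorem indepNumFin_le {n : ℕ} (h : ∀ s : Finset V, G.IsIndepFinset s → s.card ≤ n) :
    G.indepNumFin ≤ n :=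
  csSup_le' (by rintro _ ⟨s, hs, rfl⟩; exact h s hs)

end SimpleGraph

/-- The independence number of the OR product of two finite simple graphs equals the
product of their independence numbers: `α(G × H) = α(G) · α(H)`. -/
theorem indepNum_orProd {V W : Type*} [Fintype V] [Fintype W]
    (G : SimpleGraph V) (H : SimpleGraph W) :
    (G.orProd H).indepNumFin = G.indepNumFin * H.indepNumFin := by
  classical
  apply le_antisymm
  · refine SimpleGraph.indepNumFin_le fun s hs => ?_
    calc s.card ≤ (s.image Prod.fst ×ˢ s.image Prod.snd).card :=
          Finset.card_le_card Finset.subset_product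
      _ = (s.image Prod.fst).card * (s.image Prod.snd).card := Finset.card_product _ _
      _ ≤ G.indepNumFin * H.indepNumFin :=
          Nat.mul_le_mul hs.image_fst.card_le_indepNumFin hs.image_snd.card_le_indepNumFin
  · obtain ⟨s, hs, hs_card⟩ := SimpleGraph.exists_isIndepFinset_card_eq_indepNumFin G
    obtain ⟨t, ht, ht_card⟩ := SimpleGraph.exists_isIndepFinset_card_eq_indepNumFin H
    calc G.indepNumFin * H.indepNumFin = (s ×ˢ t).card := by
          rw [Finset.card_product, hs_card, ht_card]
      _ ≤ (G.orProd H).indepNumFin := (hs.product ht).card_le_indepNumFin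
end

section
/- The fractional chromatic number is multiplicative under the OR product: χ_f(G × H) = χ_f(G) · χ_f(H) for all finite simple graphs G, H. In particular, χ_f(G^m) = (χ_f(G))^m for the m-fold OR product G^m. -/
/-- The `m`-fold OR product of a simple graph with itself: vertices are `m`-tuples
and two tuples are adjacent iff they are adjacent in some coordinate. -/
def SimpleGraph.orPow {V : Type*} (G : SimpleGraph V) (m : ℕ) :
    SimpleGraph (Fin m → V) where
  Adj f g := ∃ k, G.Adj (f k) (g k)
  symm := ⟨fun _ _ h => h.imp (fun _ h' => h'.symm)⟩
  loopless := ⟨fun f h => by obtain ⟨k, hk⟩ := h; exact G.loopless.irrefl (f k) hk⟩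

/-- A `b`-fold proper coloring of `G` using `a` colors. -/
def SimpleGraph.IsFoldColoring {V : Type*} (G : SimpleGraph V) (a b : ℕ) : Prop :=
  ∃ c : V → Finset (Fin a), (∀ v, (c v).card = b) ∧
    ∀ u v, G.Adj u v → Disjoint (c u) (c v)

/-- The fractional chromatic number of `G`. -/
noncomputable def SimpleGraph.fracChromaticNumber {V : Type*} (G : SimpleGraph V) : ℝ :=
  sInf {r : ℝ | ∃ a b : ℕ, 0 < b ∧ G.IsFoldColoring a b ∧ r = (a : ℝ) / b}

/-! Products of fold colorings give `χ_f(G × H) ≤ χ_f(G) χ_f(H)`. Conversely, take an `a`-color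
`b`-fold coloring of `G × H`. A color class is independent in the OR product, so its projections to
`G` and to `H` are independent. Over a vertex `v` of `G`, the colors used on the fibre `{v} × W`
form a `b`-fold coloring of `H`, so there are at least `b χ_f(H)` of them; giving `v` all these
colors is a coloring of `G` by `a` colors with at least `k = ⌈b χ_f(H)⌉` colors per vertex, whence
`χ_f(G) ≤ a / k ≤ a / (b χ_f(H))`. No LP duality is needed. Powers follow from
`G^(m+1) ≅ G × G^m`. -/

open Finset

lemma Real.le_sInf_mul_sInf {s t : Set ℝ} (hs : s.Nonempty) (ht : t.Nonempty)
    (hs₀ : ∀ x ∈ s, 0 ≤ x) (ht₀ : ∀ y ∈ t, 0 ≤ y) {r : ℝ} (h : ∀ x ∈ s, ∀ y ∈ t, r ≤ x * y) :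
    r ≤ sInf s * sInf t := by
  have h' : ∀ y ∈ t, r ≤ sInf s * y := fun y hy => by
    rw [mul_comm, ← smul_eq_mul, ← Real.sInf_smul_of_nonneg (ht₀ y hy)]
    refine le_csInf hs.smul_set ?_
    rintro _ ⟨x, hx, rfl⟩
    simpa only [smul_eq_mul, mul_comm] using h x hx y hy
  rw [← smul_eq_mul, ← Real.sInf_smul_of_nonneg (Real.sInf_nonneg hs₀)]
  refine le_csInf ht.smul_set ?_
  rintro _ ⟨y, hy, rfl⟩
  exact h' y hy

namespace SimpleGraph

variable {V W : Type*} {G : SimpleGraph V} {H : SimpleGraph W}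

def foldRatios (G : SimpleGraph V) : Set ℝ :=
  {r : ℝ | ∃ a b : ℕ, 0 < b ∧ G.IsFoldColoring a b ∧ r = (a : ℝ) / b}

lemma foldRatios_nonneg : ∀ r ∈ G.foldRatios, 0 ≤ r := by
  rintro _ ⟨a, b, -, -, rfl⟩
  positivity

lemma isFoldColoring_card_one [Fintype V] : G.IsFoldColoring (Fintype.card V) 1 := by
  classical
  refine ⟨fun v => {Fintype.equivFin V v}, fun v => rfl, fun u v huv => ?_⟩
  rw [disjoint_singleton, Ne, (Fintype.equivFin V).injective.eq_iff]
  exact huv.ne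

lemma foldRatios_nonempty [Finite V] : G.foldRatios.Nonempty := by
  have := Fintype.ofFinite V
  exact ⟨_, _, 1, one_pos, isFoldColoring_card_one, rfl⟩

lemma fracChromaticNumber_nonneg : 0 ≤ G.fracChromaticNumber :=
  Real.sInf_nonneg foldRatios_nonneg

lemma fracChromaticNumber_le {a b : ℕ} (hb : 0 < b) (h : G.IsFoldColoring a b) :
    G.fracChromaticNumber ≤ a / b :=
  csInf_le ⟨0, foldRatios_nonneg⟩ ⟨a, b, hb, h, rfl⟩

lemma le_fracChromaticNumber [Finite V] {r : ℝ}
    (h : ∀ a b : ℕ, 0 < b → G.IsFoldColoring a b → r ≤ a / b) : r ≤ G.fracChromaticNumber :=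
  le_csInf foldRatios_nonempty fun _ ⟨a, b, hb, hab, hr⟩ => hr ▸ h a b hb hab

lemma IsFoldColoring.comap {V' : Type*} {G' : SimpleGraph V'} (f : G →g G') {a b : ℕ}
    (h : G'.IsFoldColoring a b) : G.IsFoldColoring a b := by
  obtain ⟨c, hcard, hdisj⟩ := h
  exact ⟨c ∘ f, fun v => hcard (f v), fun u v huv => hdisj _ _ (f.map_adj huv)⟩

lemma foldRatios_subset_of_hom {V' : Type*} {G' : SimpleGraph V'} (f : G →g G') :
    G'.foldRatios ⊆ G.foldRatios :=
  fun _ ⟨a, b, hb, h, hr⟩ => ⟨a, b, hb, h.comap f, hr⟩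

lemma fracChromaticNumber_congr {V' : Type*} {G' : SimpleGraph V'} (e : G ≃g G') :
    G.fracChromaticNumber = G'.fracChromaticNumber :=
  congrArg sInf <| (foldRatios_subset_of_hom e.symm.toHom).antisymm
    (foldRatios_subset_of_hom e.toHom)

lemma fracChromaticNumber_bot [Finite V] [Nonempty V] :
    (⊥ : SimpleGraph V).fracChromaticNumber = 1 := by
  refine le_antisymm ?_ (le_fracChromaticNumber fun a b hb ⟨c, hcard, _⟩ => ?_)
  · simpa using fracChromaticNumber_le one_pos
      (⟨fun _ => {0}, fun _ => rfl, fun _ _ h => h.elim⟩ : (⊥ : SimpleGraph V).IsFoldColoring 1 1)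
  · obtain ⟨v⟩ := ‹Nonempty V›
    have hba : b ≤ a := by simpa [hcard v] using card_le_univ (c v)
    rw [le_div_iff₀ (by exact_mod_cast hb), one_mul]
    exact_mod_cast hba

lemma fracChromaticNumber_le_of_le_card {ι : Type*} (s : Finset ι) (c : V → Finset ι)
    (hcs : ∀ v, c v ⊆ s) (hdisj : ∀ u v, G.Adj u v → Disjoint (c u) (c v)) {k : ℕ}
    (hk : 0 < k) (hck : ∀ v, k ≤ #(c v)) : G.fracChromaticNumber ≤ #s / k := by
  classical
  choose t hts htk using fun v => exists_subset_card_eq (hck v)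
  refine fracChromaticNumber_le hk
    ⟨fun v => ((t v).subtype (· ∈ s)).map s.equivFin.toEmbedding, fun v => ?_, fun u v huv => ?_⟩
  · rw [card_map, card_subtype, filter_true_of_mem fun i hi => hcs v (hts v hi), htk]
  · rw [disjoint_map, Finset.disjoint_left]
    intro i hiu hiv
    rw [mem_subtype] at hiu hiv
    exact Finset.disjoint_left.1 (hdisj u v huv) (hts u hiu) (hts v hiv)

lemma IsFoldColoring.orProd {a₁ b₁ a₂ b₂ : ℕ} (h₁ : G.IsFoldColoring a₁ b₁)
    (h₂ : H.IsFoldColoring a₂ b₂) : (G.orProd H).IsFoldColoring (a₁ * a₂) (b₁ * b₂) := by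
  obtain ⟨c₁, hc₁, hd₁⟩ := h₁
  obtain ⟨c₂, hc₂, hd₂⟩ := h₂
  refine ⟨fun p => (c₁ p.1 ×ˢ c₂ p.2).map finProdFinEquiv.toEmbedding, fun p => ?_,
    fun p q hpq => ?_⟩
  · rw [card_map, card_product, hc₁, hc₂]
  · rw [disjoint_map]
    rcases hpq with h | h
    · exact disjoint_product.2 (Or.inl (hd₁ _ _ h))
    · exact disjoint_product.2 (Or.inr (hd₂ _ _ h))

lemma fracChromaticNumber_orProd_le [Finite V] [Finite W] :
    (G.orProd H).fracChromaticNumber ≤ G.fracChromaticNumber * H.fracChromaticNumber := by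
  refine Real.le_sInf_mul_sInf foldRatios_nonempty foldRatios_nonempty foldRatios_nonneg
    foldRatios_nonneg ?_
  rintro _ ⟨a₁, b₁, hb₁, h₁, rfl⟩ _ ⟨a₂, b₂, hb₂, h₂, rfl⟩
  rw [div_mul_div_comm]
  exact_mod_cast fracChromaticNumber_le (Nat.mul_pos hb₁ hb₂) (h₁.orProd h₂)

lemma IsFoldColoring.mul_fracChromaticNumber_le_of_orProd {a b : ℕ} (hb : 0 < b)
    (h : (G.orProd H).IsFoldColoring a b) :
    G.fracChromaticNumber * H.fracChromaticNumber ≤ a / b := by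
  classical
  obtain ⟨c, hcard, hdisj⟩ := h
  set D : V → Finset (Fin a) := fun v => univ.filter fun i => ∃ w, i ∈ c (v, w)
  have hbR : (0 : ℝ) < b := by exact_mod_cast hb
  have hH : ∀ v, b * H.fracChromaticNumber ≤ #(D v) := fun v => by
    have := fracChromaticNumber_le_of_le_card (D v) (fun w => c (v, w))
      (fun w i hi => mem_filter.2 ⟨mem_univ i, w, hi⟩) (fun _ _ h => hdisj _ _ (Or.inr h)) hb
      (fun w => (hcard _).ge)
    rwa [le_div_iff₀ hbR, mul_comm] at this
  set k := ⌈b * H.fracChromaticNumber⌉₊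
  have hbk : H.fracChromaticNumber ≤ k / b := by
    rw [le_div_iff₀ hbR, mul_comm]
    exact Nat.le_ceil _
  rcases k.eq_zero_or_pos with hk | hk
  · rw [hk, Nat.cast_zero, zero_div] at hbk
    calc G.fracChromaticNumber * H.fracChromaticNumber ≤ 0 :=
          mul_nonpos_of_nonneg_of_nonpos fracChromaticNumber_nonneg hbk
      _ ≤ a / b := by positivity
  have hG : G.fracChromaticNumber ≤ a / k := by
    simpa using fracChromaticNumber_le_of_le_card univ D (fun _ => subset_univ _)
      (fun u u' huu' => Finset.disjoint_left.2 fun i hiu hiu' => by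
        obtain ⟨w, hw⟩ := (mem_filter.1 hiu).2
        obtain ⟨w', hw'⟩ := (mem_filter.1 hiu').2
        exact Finset.disjoint_left.1 (hdisj (u, w) (u', w') (Or.inl huu')) hw hw')
      hk fun v => Nat.ceil_le.2 (hH v)
  have hkR : (0 : ℝ) < k := by exact_mod_cast hk
  calc G.fracChromaticNumber * H.fracChromaticNumber
      ≤ a / k * (k / b) := mul_le_mul hG hbk fracChromaticNumber_nonneg (by positivity)
    _ = a / b := by field_simp

lemma mul_fracChromaticNumber_le_orProd [Finite V] [Finite W] :
    G.fracChromaticNumber * H.fracChromaticNumber ≤ (G.orProd H).fracChromaticNumber :=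
  le_fracChromaticNumber fun _ _ hb h => h.mul_fracChromaticNumber_le_of_orProd hb

theorem fracChromaticNumber_orProd [Finite V] [Finite W] (G : SimpleGraph V) (H : SimpleGraph W) :
    (G.orProd H).fracChromaticNumber = G.fracChromaticNumber * H.fracChromaticNumber :=
  fracChromaticNumber_orProd_le.antisymm mul_fracChromaticNumber_le_orProd

lemma orPow_zero (G : SimpleGraph V) : G.orPow 0 = ⊥ := by
  ext f g
  simp [orPow]

def orPowSuccIso (G : SimpleGraph V) (m : ℕ) : G.orPow (m + 1) ≃g G.orProd (G.orPow m) where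
  toEquiv := (Fin.consEquiv fun _ => V).symm
  map_rel_iff' {f g} := (Fin.exists_fin_succ (P := fun k => G.Adj (f k) (g k))).symm

theorem fracChromaticNumber_orPow [Finite V] (G : SimpleGraph V) (m : ℕ) :
    (G.orPow m).fracChromaticNumber = G.fracChromaticNumber ^ m := by
  induction m with
  | zero => rw [orPow_zero, fracChromaticNumber_bot, pow_zero]
  | succ m ih =>
    rw [fracChromaticNumber_congr (orPowSuccIso G m), fracChromaticNumber_orProd, ih, pow_succ']

end SimpleGraph

/-- The fractional chromatic number is multiplicative under the OR product:
`χ_f(G × H) = χ_f(G) · χ_f(H)`; in particular `χ_f(G^m) = (χ_f(G))^m`. -/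
theorem fracChromaticNumber_orProd {V W : Type*} [Fintype V] [Fintype W]
    (G : SimpleGraph V) (H : SimpleGraph W) :
    (G.orProd H).fracChromaticNumber = G.fracChromaticNumber * H.fracChromaticNumber ∧
    ∀ m : ℕ, (G.orPow m).fracChromaticNumber = G.fracChromaticNumber ^ m :=
  ⟨SimpleGraph.fracChromaticNumber_orProd G H, SimpleGraph.fracChromaticNumber_orPow G⟩
end

section
/- There exist five unit vectors v_1, …, v_5 in R^3 with v_i orthogonal to v_{i+1} for i = 1,…,5 (indices mod 5), and a unit vector ψ ∈ R^3, such that Σ_{i=1}^5 ⟨ψ, v_i⟩² = √5 > 2. -/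
/-!
Put the five vectors on a cone around the north pole `ψ`, with polar angle `θ` and azimuths
`4πi/5`. Consecutive azimuths differ by `4π/5`, so `⟪vᵢ, vᵢ₊₁⟫ = sin²θ cos(4π/5) + cos²θ`,
which vanishes when `cos²θ = c / (1 + c)` for `c = cos(π/5)`. Then
`Σ ⟪ψ, vᵢ⟫² = 5 cos²θ = 5c / (1 + c) = √5`, using `c = (1 + √5)/4`.
-/

open Real

noncomputable def sphericalPoint (θ φ : ℝ) : EuclideanSpace ℝ (Fin 3) :=
  !₂[sin θ * cos φ, sin θ * sin φ, cos θ]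

theorem inner_sphericalPoint (θ φ θ' φ' : ℝ) :
    inner ℝ (sphericalPoint θ φ) (sphericalPoint θ' φ') =
      sin θ * sin θ' * cos (φ - φ') + cos θ * cos θ' := by
  simp only [sphericalPoint, PiLp.inner_apply, Fin.sum_univ_three,
    Matrix.cons_val_zero, Matrix.cons_val_one, Matrix.cons_val_two, Matrix.head_cons,
    Matrix.tail_cons, RCLike.inner_apply, conj_trivial, cos_sub]
  ring

theorem norm_sphericalPoint (θ φ : ℝ) : ‖sphericalPoint θ φ‖ = 1 := by
  have h : ‖sphericalPoint θ φ‖ ^ 2 = 1 := by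
    rw [← real_inner_self_eq_norm_sq, inner_sphericalPoint, sub_self, cos_zero]
    nlinarith [sin_sq_add_cos_sq θ]
  exact (pow_eq_one_iff_of_nonneg (norm_nonneg _) two_ne_zero).mp h

/-- This includes the wrap-around `Fin.last n + 1 = 0`, where the angles differ by
`2πk / (n + 1) - 2πk`. -/
theorem cos_sub_fin_succ_angle (n : ℕ) (k : ℤ) (i : Fin (n + 1)) :
    cos (2 * π * k * i / (n + 1) - 2 * π * k * (i + 1 : Fin (n + 1)) / (n + 1)) =
      cos (2 * π * k / (n + 1)) := by
  rw [Fin.val_add_one]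
  split_ifs with h
  · subst h
    have hangle : 2 * π * k * (Fin.last n : ℕ) / (n + 1) - 2 * π * k * ((0 : ℕ) : ℝ) / (n + 1)
        = -(2 * π * k / (n + 1)) - ((-k : ℤ) : ℝ) * (2 * π) := by
      simp only [Fin.val_last, Nat.cast_zero, Int.cast_neg]
      field_simp
      ring
    rw [hangle, cos_sub_int_mul_two_pi, cos_neg]
  · rw [← cos_neg]
    congr 1
    push_cast
    field_simp
    ring

theorem five_mul_cos_pi_div_five_div : 5 * (cos (π / 5) / (1 + cos (π / 5))) = √5 := by
  have h5 : √5 ^ 2 = 5 := sq_sqrt (by norm_num)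
  rw [cos_pi_div_five]
  field_simp
  nlinarith

/-- KCBS: there exist five unit vectors `v₁,…,v₅` in `ℝ³` with `v_i ⊥ v_{i+1}`
(indices mod 5) and a unit vector `ψ ∈ ℝ³` such that
`Σ_{i=1}^5 ⟨ψ, v_i⟩² = √5 > 2`. -/
theorem kcbs_realization :
    ∃ (v : Fin 5 → EuclideanSpace ℝ (Fin 3)) (ψ : EuclideanSpace ℝ (Fin 3)),
      (∀ i, ‖v i‖ = 1) ∧
      (∀ i, inner ℝ (v i) (v (i + 1)) = (0 : ℝ)) ∧
      ‖ψ‖ = 1 ∧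
      (∑ i, (inner ℝ ψ (v i) : ℝ) ^ 2 = Real.sqrt 5) ∧
      Real.sqrt 5 > 2 := by
  set c := cos (π / 5)
  have hc : 0 < c := cos_pos_of_mem_Ioo ⟨by linarith [pi_pos], by linarith [pi_pos]⟩
  have hratio : 0 ≤ c / (1 + c) ∧ c / (1 + c) ≤ 1 :=
    ⟨by positivity, (div_le_one (by positivity)).mpr (by linarith)⟩
  set θ := arccos √(c / (1 + c))
  have hcos : cos θ ^ 2 = c / (1 + c) := by
    rw [cos_arccos (by linarith [sqrt_nonneg (c / (1 + c))]) (sqrt_le_one.mpr hratio.2),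
      sq_sqrt hratio.1]
  have hazimuth (i : Fin 5) : cos (4 * π * i / 5 - 4 * π * (i + 1 : Fin 5) / 5) = -c := by
    have h := cos_sub_fin_succ_angle 4 2 i
    push_cast at h
    rw [show (4 : ℝ) + 1 = 5 by norm_num, show 2 * π * 2 / 5 = π - π / 5 by ring,
      cos_pi_sub] at h
    convert h using 3 <;> ring
  refine ⟨fun i => sphericalPoint θ (4 * π * i / 5), sphericalPoint 0 0,
    fun i => norm_sphericalPoint _ _, fun i => ?_, norm_sphericalPoint _ _, ?_,
    (lt_sqrt (by norm_num)).mpr (by norm_num)⟩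
  · rw [inner_sphericalPoint, hazimuth, ← sq, ← sq, sin_sq, hcos]
    field_simp
    ring
  · simp only [inner_sphericalPoint, sin_zero, cos_zero, zero_mul, one_mul, zero_add,
      Finset.sum_const, Finset.card_univ, Fintype.card_fin, nsmul_eq_mul, hcos]
    push_cast
    exact five_mul_cos_pi_div_five_div
end
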